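/- The map x \mapsto H_\infty x^{m-1} is a bounded positively (m-1)-homogeneous operator from l^1 to l^p for every 1 < p < \infty: for all x in l^1 and t > 0, H_\infty (tx)^{m-1} = t^{m-1} H_\infty x^{m-1}, and \|H_\infty x^{m-1}\|_p \leq (\sum_{i \geq 1} i^{-p})^{1/p} \|x\|_1^{m-1}. -/

import Mathlib

/-!
Every denominator `i + j₁ + ⋯ + j_{m-1} + 1` is at least `i + 1`, and summing the products
`|x j₁| ⋯ |x j_{m-1}|` over all multi-indices gives `‖x‖₁ ^ (m - 1)`. Hence
`|(H_∞ x^{m-1})_i| ≤ ‖x‖₁ ^ (m - 1) / (i + 1)`, and the `ℓ^p` bound follows by comparison with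
the `p`-series. Homogeneity is immediate since every term has degree `m - 1` in `x`.
-/

/-- The `i`-th component of `H_∞ x^{m-1}` (indices 0-based, so the denominator
`i + i_2 + ... + i_m - m + 1` becomes `(i + ∑ k, j k) + 1`). -/
noncomputable def hilbertComp (m : ℕ) (x : ℕ → ℝ) (i : ℕ) : ℝ :=
  ∑' j : Fin (m - 1) → ℕ, (∏ k, x (j k)) / (((i + ∑ k, j k) + 1 : ℕ) : ℝ)

open Finset

theorem hasSum_prod_fin_pi_of_nonneg {ι : Type*} {f : ι → ℝ} {a : ℝ} (hf : HasSum f a)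
    (hf0 : 0 ≤ f) (n : ℕ) : HasSum (fun j : Fin n → ι => ∏ k, f (j k)) (a ^ n) := by
  induction n with
  | zero => simp
  | succ n ih =>
    have hprod_nonneg : 0 ≤ fun j : Fin n → ι => ∏ k, f (j k) :=
      fun j => prod_nonneg fun k _ => hf0 (j k)
    have hsummable := hf.summable.mul_of_nonneg ih.summable hf0 hprod_nonneg
    -- naming `g` spares the elaborator an expensive higher-order unification
    have hprod := HasSum.mul (g := fun j : Fin n → ι => ∏ k, f (j k)) hf ih hsummable
    rw [pow_succ', ← (Fin.consEquiv fun _ => ι).hasSum_iff]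
    exact hprod.congr_fun fun p => Fin.prod_univ_succ _

theorem hilbertComp_const_mul (m : ℕ) (x : ℕ → ℝ) (t : ℝ) (i : ℕ) :
    hilbertComp m (fun k => t * x k) i = t ^ (m - 1) * hilbertComp m x i := by
  simp only [hilbertComp, prod_mul_distrib, prod_const, card_univ, Fintype.card_fin, mul_div_assoc]
  exact tsum_mul_left

theorem abs_hilbertComp_le (m : ℕ) {x : ℕ → ℝ} (hx : Summable fun k => |x k|) (i : ℕ) :
    |hilbertComp m x i| ≤ (∑' k, |x k|) ^ (m - 1) / ((i : ℝ) + 1) := by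
  have hsum := (hasSum_prod_fin_pi_of_nonneg hx.hasSum (fun k => abs_nonneg (x k)) (m - 1))
    |>.div_const ((i : ℝ) + 1)
  refine tsum_of_norm_bounded (f := fun j : Fin (m - 1) → ℕ =>
    (∏ k, x (j k)) / (((i + ∑ k, j k) + 1 : ℕ) : ℝ)) hsum fun j => ?_
  have hden : (i : ℝ) + 1 ≤ (((i + ∑ k, j k) + 1 : ℕ) : ℝ) := by
    exact_mod_cast Nat.add_le_add_right (Nat.le_add_right i _) 1
  rw [Real.norm_eq_abs, abs_div, abs_prod, Nat.abs_cast]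
  gcongr

theorem summable_nat_add_one_rpow_neg {p : ℝ} (hp : 1 < p) :
    Summable fun i : ℕ => ((i : ℝ) + 1) ^ (-p) := by
  simpa using (summable_nat_add_iff 1).2 (Real.summable_nat_rpow.2 (neg_lt_neg hp))

theorem summable_rpow_and_rpow_tsum_le_of_abs_le_div {a : ℕ → ℝ} {C p : ℝ} (hp : 1 < p)
    (ha : ∀ i, |a i| ≤ C / ((i : ℝ) + 1)) :
    Summable (fun i => |a i| ^ p) ∧
      (∑' i, |a i| ^ p) ^ (1 / p) ≤ (∑' i : ℕ, ((i : ℝ) + 1) ^ (-p)) ^ (1 / p) * C := by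
  have hp0 : 0 < p := zero_lt_one.trans hp
  have hC : 0 ≤ C := by simpa using (abs_nonneg _).trans (ha 0)
  have hT := summable_nat_add_one_rpow_neg hp
  have hle : ∀ i : ℕ, |a i| ^ p ≤ C ^ p * ((i : ℝ) + 1) ^ (-p) := fun i => by
    calc |a i| ^ p ≤ (C / ((i : ℝ) + 1)) ^ p := by gcongr; exact ha i
      _ = C ^ p * ((i : ℝ) + 1) ^ (-p) := by
        rw [Real.div_rpow hC (by positivity), div_eq_mul_inv, Real.rpow_neg (by positivity)]
  have hsum : Summable fun i => |a i| ^ p :=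
    .of_nonneg_of_le (fun i => by positivity) hle (hT.mul_left _)
  refine ⟨hsum, ?_⟩
  calc (∑' i, |a i| ^ p) ^ (1 / p)
      ≤ (C ^ p * ∑' i : ℕ, ((i : ℝ) + 1) ^ (-p)) ^ (1 / p) := by
        rw [← tsum_mul_left]
        exact Real.rpow_le_rpow (tsum_nonneg fun i => by positivity)
          (hsum.tsum_le_tsum hle (hT.mul_left _)) (by positivity)
    _ = (∑' i : ℕ, ((i : ℝ) + 1) ^ (-p)) ^ (1 / p) * C := by
        rw [Real.mul_rpow (by positivity) (tsum_nonneg fun i => by positivity), one_div,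
          Real.rpow_rpow_inv hC hp0.ne', mul_comm]

theorem hilbertComp_homogeneous_bounded_general (m : ℕ) (x : ℕ → ℝ)
    (hx : Summable fun i => |x i|) :
    (∀ t : ℝ, 0 < t → ∀ i : ℕ,
      hilbertComp m (fun k => t * x k) i = t ^ (m - 1) * hilbertComp m x i) ∧
    (∀ p : ℝ, 1 < p →
      Summable (fun i : ℕ => |hilbertComp m x i| ^ p) ∧
      (∑' i : ℕ, |hilbertComp m x i| ^ p) ^ (1 / p)
        ≤ (∑' i : ℕ, ((i : ℝ) + 1) ^ (-p)) ^ (1 / p) * (∑' k, |x k|) ^ (m - 1)) :=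
  ⟨fun t _ i => hilbertComp_const_mul m x t i,
    fun _ hp => summable_rpow_and_rpow_tsum_le_of_abs_le_div hp (abs_hilbertComp_le m hx)⟩

theorem hilbertComp_homogeneous_bounded (m : ℕ) (hm : 2 ≤ m) (x : ℕ → ℝ)
    (hx : Summable fun i => |x i|) :
    (∀ t : ℝ, 0 < t → ∀ i : ℕ,
      hilbertComp m (fun k => t * x k) i = t ^ (m - 1) * hilbertComp m x i) ∧
    (∀ p : ℝ, 1 < p →
      Summable (fun i : ℕ => |hilbertComp m x i| ^ p) ∧
      (∑' i : ℕ, |hilbertComp m x i| ^ p) ^ (1 / p)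
        ≤ (∑' i : ℕ, ((i : ℝ) + 1) ^ (-p)) ^ (1 / p) * (∑' k, |x k|) ^ (m - 1)) :=
  hilbertComp_homogeneous_bounded_general m x hx
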